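/- Let S be an orthogonal projection on ℂ^{a+b}, written in block form S = [[S_A, S_{AB}], [S_{BA}, S_B]] with S_A of size a×a and S_B of size b×b. Assume that neither 0 nor 1 is an eigenvalue of S_A and neither 0 nor 1 is an eigenvalue of S_B. Then a = b, and there exists a unitary u : ℂ^a → ℂ^b such that S_B = u·(1 − S_A)·u†, S_{BA} = u·S_A^{1/2}·(1 − S_A)^{1/2}, and S = (1 ⊕ u) · [[S_A, (S_A(1−S_A))^{1/2}], [(S_A(1−S_A))^{1/2}, 1 − S_A]] · (1 ⊕ u)†. -/

import Mathlib

open scoped Classical ComplexOrder Matrix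

/-- The positive semidefinite square root of a positive semidefinite matrix
(junk value `0` if the matrix is not positive semidefinite). -/
noncomputable def msqrt {n : Type*} [Fintype n] [DecidableEq n]
    (A : Matrix n n ℂ) : Matrix n n ℂ :=
  if h : A.PosSemidef then
    (h.1.eigenvectorUnitary : Matrix n n ℂ) *
      Matrix.diagonal ((↑) ∘ (fun x : ℝ => Real.sqrt x) ∘ h.1.eigenvalues) *
      (star h.1.eigenvectorUnitary : Matrix n n ℂ)
  else 0

/-- The Hilbert-Schmidt (Frobenius) norm of a matrix. -/
noncomputable def frob {n : Type*} [Fintype n]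
    (M : Matrix n n ℂ) : ℝ :=
  Real.sqrt (∑ i, ∑ j, ‖M i j‖ ^ 2)

/-- `η(A,B) = ‖√(1−A)·√B − √A·√(1−B)‖₂`. -/
noncomputable def eta {n : Type*} [Fintype n] [DecidableEq n]
    (A B : Matrix n n ℂ) : ℝ :=
  frob (msqrt (1 - A) * msqrt B - msqrt A * msqrt (1 - B))

noncomputable def Matrix.PosSemidef.sqrt {n : Type*} [Fintype n] [DecidableEq n]
    {A : Matrix n n ℂ} (h : A.PosSemidef) : Matrix n n ℂ :=
  (h.1.eigenvectorUnitary : Matrix n n ℂ) *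
    Matrix.diagonal ((↑) ∘ (fun x : ℝ => Real.sqrt x) ∘ h.1.eigenvalues) *
    (star h.1.eigenvectorUnitary : Matrix n n ℂ)
lemma Matrix.PosSemidef.sqrt_isHermitian' {n : Type*} [Fintype n] [DecidableEq n]
    {A : Matrix n n ℂ} (h : A.PosSemidef) : h.sqrt.IsHermitian := by
  unfold Matrix.PosSemidef.sqrt
  simp only [Matrix.IsHermitian, Matrix.conjTranspose_mul, Matrix.diagonal_conjTranspose,
    Matrix.star_eq_conjTranspose, Matrix.conjTranspose_conjTranspose, mul_assoc]
  congr 3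
  funext i
  simp
lemma Matrix.PosSemidef.sqrt_mul_self {n : Type*} [Fintype n] [DecidableEq n]
    {A : Matrix n n ℂ} (h : A.PosSemidef) : h.sqrt * h.sqrt = A := by
  have hU2 : star (h.1.eigenvectorUnitary : Matrix n n ℂ) * h.1.eigenvectorUnitary = 1 :=
    Matrix.mem_unitaryGroup_iff'.mp h.1.eigenvectorUnitary.2
  unfold Matrix.PosSemidef.sqrt
  conv_rhs => rw [h.1.spectral_theorem]
  rw [show ∀ U E V W F X : Matrix n n ℂ, U * E * V * (W * F * X) = U * (E * (V * W) * F) * X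
    from fun _ _ _ _ _ _ => by simp only [mul_assoc], hU2, mul_one, Matrix.diagonal_mul_diagonal]
  simp only [Function.comp_def, ← Complex.ofReal_mul, Real.mul_self_sqrt (h.eigenvalues_nonneg _)]
  rfl

section auxlemmas
open Matrix

lemma commute_sqrt_aux {n : Type*} [Fintype n] [DecidableEq n] {B X : Matrix n n ℂ}
    (hB : B.PosSemidef) (h : X * B = B * X) : X * hB.sqrt = hB.sqrt * X := by
  set U : Matrix n n ℂ := (hB.1.eigenvectorUnitary : Matrix n n ℂ) with hUdef
  have hU1 : U * star U = 1 := Matrix.mem_unitaryGroup_iff.mp hB.1.eigenvectorUnitary.2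
  have hU2 : star U * U = 1 := Matrix.mem_unitaryGroup_iff'.mp hB.1.eigenvectorUnitary.2
  set d := hB.1.eigenvalues with hddef
  set D : Matrix n n ℂ := Matrix.diagonal ((↑) ∘ d) with hDdef
  set E : Matrix n n ℂ := Matrix.diagonal ((↑) ∘ Real.sqrt ∘ d) with hEdef
  have hspec : B = U * D * star U := hB.1.spectral_theorem
  have hsqrt : hB.sqrt = U * E * star U := rfl
  have cancel : ∀ M N : Matrix n n ℂ, U * M * star U = U * N * star U → M = N := by
    intro M N hMN
    have h2 := congrArg (fun Z => star U * Z * U) hMN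
    simp only [← mul_assoc, hU2, one_mul] at h2
    rwa [mul_assoc, mul_assoc, hU2, mul_one, mul_one] at h2
  have hY : (star U * X * U) * D = D * (star U * X * U) := by
    apply cancel
    have e1 : U * ((star U * X * U) * D) * star U = X * B := by
      simp only [← mul_assoc, hU1, one_mul]
      rw [hspec]
      simp only [← mul_assoc]
    have e2 : U * (D * (star U * X * U)) * star U = B * X := by
      simp only [← mul_assoc]
      rw [mul_assoc (U * D * star U * X) U (star U), hU1, mul_one, hspec]
    rw [e1, e2, h]
  have hYE : (star U * X * U) * E = E * (star U * X * U) := by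
    ext i j
    have hYij := congrFun (congrFun hY i) j
    simp only [hDdef, hEdef, Matrix.mul_diagonal, Matrix.diagonal_mul,
      Function.comp_apply] at hYij ⊢
    by_cases hd : d i = d j
    · rw [hd, mul_comm]
    · have hz : (star U * X * U) i j = 0 := by
        have : (star U * X * U) i j * ((d j : ℂ) - (d i : ℂ)) = 0 := by ring_nf; linear_combination hYij
        rcases mul_eq_zero.mp this with h0 | h0
        · exact h0
        · exfalso; apply hd; have := sub_eq_zero.mp h0
          exact_mod_cast this.symm
      rw [hz, zero_mul, mul_zero]
  have h1 : X * (U * E * star U) = U * ((star U * X * U) * E) * star U := by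
    calc X * (U * E * star U) = (U * star U) * X * (U * E * star U) := by rw [hU1, one_mul]
      _ = U * ((star U * X * U) * E) * star U := by simp only [mul_assoc]
  have h2 : U * (E * (star U * X * U)) * star U = (U * E * star U) * X := by
    calc U * (E * (star U * X * U)) * star U
        = (U * E * star U) * X * (U * star U) := by simp only [mul_assoc]
      _ = (U * E * star U) * X := by rw [hU1, mul_one]
  rw [hsqrt, h1, hYE, h2]

end auxlemmas

theorem projection_normal_form {a b : ℕ}
    (S : Matrix (Fin a ⊕ Fin b) (Fin a ⊕ Fin b) ℂ)
    (hherm : Sᴴ = S) (hproj : S * S = S)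
    (hA0 : IsUnit (Matrix.toBlocks₁₁ S)) (hA1 : IsUnit (1 - Matrix.toBlocks₁₁ S))
    (hB0 : IsUnit (Matrix.toBlocks₂₂ S)) (hB1 : IsUnit (1 - Matrix.toBlocks₂₂ S)) :
    a = b ∧
      ∃ u : Matrix (Fin b) (Fin a) ℂ,
        uᴴ * u = 1 ∧ u * uᴴ = 1 ∧
        Matrix.toBlocks₂₂ S = u * (1 - Matrix.toBlocks₁₁ S) * uᴴ ∧
        Matrix.toBlocks₂₁ S =
          u * (msqrt (Matrix.toBlocks₁₁ S) * msqrt (1 - Matrix.toBlocks₁₁ S)) ∧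
        S = (Matrix.fromBlocks 1 0 0 u : Matrix (Fin a ⊕ Fin b) (Fin a ⊕ Fin a) ℂ) *
              Matrix.fromBlocks (Matrix.toBlocks₁₁ S)
                (msqrt (Matrix.toBlocks₁₁ S) * msqrt (1 - Matrix.toBlocks₁₁ S))
                (msqrt (Matrix.toBlocks₁₁ S) * msqrt (1 - Matrix.toBlocks₁₁ S))
                (1 - Matrix.toBlocks₁₁ S) *
              (Matrix.fromBlocks 1 0 0 u)ᴴ := by
  classical
  set A := Matrix.toBlocks₁₁ S with hAdef
  set B := Matrix.toBlocks₂₂ S with hBdef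
  set K := Matrix.toBlocks₂₁ S with hKdef
  -- Hermitian structure of the blocks
  have hC : Matrix.toBlocks₁₂ S = Kᴴ := by
    ext i j
    have := congrFun (congrFun hherm (Sum.inl i)) (Sum.inr j)
    simpa [hKdef, Matrix.toBlocks₁₂, Matrix.toBlocks₂₁, Matrix.conjTranspose_apply] using this.symm
  have hS : S = Matrix.fromBlocks A Kᴴ K B := by
    rw [← hC, hAdef, hBdef, hKdef, Matrix.fromBlocks_toBlocks]
  -- block equations from S * S = S
  have hmul : Matrix.fromBlocks A Kᴴ K B * Matrix.fromBlocks A Kᴴ K B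
      = Matrix.fromBlocks A Kᴴ K B := by rw [← hS]; exact hproj
  rw [Matrix.fromBlocks_multiply] at hmul
  have e11 : A * A + Kᴴ * K = A := by
    have := congrArg Matrix.toBlocks₁₁ hmul
    simpa [Matrix.toBlocks_fromBlocks₁₁] using this
  have e21 : K * A + B * K = K := by
    have := congrArg Matrix.toBlocks₂₁ hmul
    simpa [Matrix.toBlocks_fromBlocks₂₁] using this
  have e22 : K * Kᴴ + B * B = B := by
    have := congrArg Matrix.toBlocks₂₂ hmul
    simpa [Matrix.toBlocks_fromBlocks₂₂] using this
  have hKK : Kᴴ * K = A * (1 - A) := by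
    rw [mul_one_sub]
    exact eq_sub_of_add_eq' e11
  have hKKt : K * Kᴴ = B * (1 - B) := by
    rw [mul_one_sub]
    exact eq_sub_of_add_eq e22
  -- a = b via rank
  have hab : a = b := by
    have r1 : K.rank = Fintype.card (Fin a) := by
      rw [← Matrix.rank_conjTranspose_mul_self, hKK]
      exact Matrix.rank_of_isUnit _ (hA0.mul hA1)
    have r2 : K.rank = Fintype.card (Fin b) := by
      rw [← Matrix.rank_self_mul_conjTranspose, hKKt]
      exact Matrix.rank_of_isUnit _ (hB0.mul hB1)
    simpa using r1.symm.trans r2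
  subst hab
  refine ⟨rfl, ?_⟩
  -- positivity of blocks
  have hSpsd : S.PosSemidef := by
    have h1 : S = Sᴴ * S := by rw [hherm, hproj]
    rw [h1]; exact Matrix.posSemidef_conjTranspose_mul_self S
  have h1Spsd : (1 - S).PosSemidef := by
    have h1 : (1 - S) = (1 - S)ᴴ * (1 - S) := by
      rw [Matrix.conjTranspose_sub, Matrix.conjTranspose_one, hherm,
        sub_mul, one_mul, mul_sub, mul_one, hproj]
      abel
    rw [h1]; exact Matrix.posSemidef_conjTranspose_mul_self _
  have hApsd : A.PosSemidef := hSpsd.submatrix Sum.inl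
  have h1Apsd : (1 - A).PosSemidef := by
    have h := h1Spsd.submatrix Sum.inl
    have heq : (1 - S).submatrix Sum.inl Sum.inl = 1 - A := by
      ext i j
      simp [Matrix.submatrix_apply, Matrix.sub_apply, Matrix.one_apply, hAdef,
        Matrix.toBlocks₁₁]
    rwa [heq] at h
  have hmA : msqrt A = hApsd.sqrt := dif_pos hApsd
  have hm1A : msqrt (1 - A) = h1Apsd.sqrt := dif_pos h1Apsd
  set P := hApsd.sqrt with hPdef
  set Q := h1Apsd.sqrt with hQdef
  have hPP : P * P = A := hApsd.sqrt_mul_self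
  have hQQ : Q * Q = 1 - A := h1Apsd.sqrt_mul_self
  have hPh : Pᴴ = P := hApsd.sqrt_isHermitian'
  have hQh : Qᴴ = Q := h1Apsd.sqrt_isHermitian'
  have hPA : P * A = A * P := by rw [← hPP, ← mul_assoc]
  have hP1A : P * (1 - A) = (1 - A) * P := by
    rw [Matrix.mul_sub, Matrix.sub_mul, mul_one, one_mul, hPA]
  have hcomm : P * Q = Q * P := commute_sqrt_aux h1Apsd hP1A
  have hRR : (P * Q) * (P * Q) = A * (1 - A) := by
    rw [show (P * Q) * (P * Q) = P * (Q * P) * Q from by simp only [mul_assoc], ← hcomm,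
      show P * (P * Q) * Q = (P * P) * (Q * Q) from by simp only [mul_assoc], hPP, hQQ]
  have hRh : (P * Q)ᴴ = P * Q := by
    rw [Matrix.conjTranspose_mul, hPh, hQh, hcomm]
  have hRA : (P * Q) * A = A * (P * Q) := by
    rw [mul_assoc]
    have hQA : Q * A = A * Q := by
      rw [show Q * A = Q - Q * (1 - A) from by rw [Matrix.mul_sub, mul_one]; abel,
        show A * Q = Q - (1 - A) * Q from by rw [Matrix.sub_mul, one_mul]; abel,
        show Q * (1 - A) = (1 - A) * Q from by rw [← hQQ, ← mul_assoc]]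
    rw [hQA, ← mul_assoc, hPA, mul_assoc]
  have hR1A : (P * Q) * (1 - A) = (1 - A) * (P * Q) := by
    rw [Matrix.mul_sub, Matrix.sub_mul, mul_one, one_mul, hRA]
  have hRdet : IsUnit (P * Q).det := by
    have hu : IsUnit ((P * Q) * (P * Q)).det := by
      rw [hRR]; exact (Matrix.isUnit_iff_isUnit_det _).mp (hA0.mul hA1)
    rw [Matrix.det_mul] at hu
    exact (isUnit_of_mul_isUnit_left hu)
  have hRinv : (P * Q) * (P * Q)⁻¹ = 1 := Matrix.mul_nonsing_inv _ hRdet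
  have hRinv' : (P * Q)⁻¹ * (P * Q) = 1 := Matrix.nonsing_inv_mul _ hRdet
  have hKdet : IsUnit K.det := by
    have hu : IsUnit (Kᴴ * K).det := by
      rw [hKK]; exact (Matrix.isUnit_iff_isUnit_det _).mp (hA0.mul hA1)
    rw [Matrix.det_mul] at hu
    exact isUnit_of_mul_isUnit_right hu
  have hKinv : K * K⁻¹ = 1 := Matrix.mul_nonsing_inv _ hKdet
  have hu1 : (K * (P * Q)⁻¹)ᴴ * (K * (P * Q)⁻¹) = 1 := by
    rw [Matrix.conjTranspose_mul, Matrix.conjTranspose_nonsing_inv, hRh,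
      mul_assoc, ← mul_assoc Kᴴ K _, hKK, ← hRR, mul_assoc (P * Q) (P * Q) _, hRinv,
      mul_one, hRinv']
  have hu2 : (K * (P * Q)⁻¹) * (K * (P * Q)⁻¹)ᴴ = 1 := mul_eq_one_comm.mp hu1
  have huR : (K * (P * Q)⁻¹) * (P * Q) = K := by rw [mul_assoc, hRinv', mul_one]
  have huHK : (K * (P * Q)⁻¹)ᴴ * K = P * Q := by
    rw [Matrix.conjTranspose_mul, Matrix.conjTranspose_nonsing_inv, hRh,
      mul_assoc, hKK, ← hRR, ← mul_assoc, hRinv', one_mul]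
  have hRuh : (P * Q) * (K * (P * Q)⁻¹)ᴴ = Kᴴ := by
    rw [Matrix.conjTranspose_mul, Matrix.conjTranspose_nonsing_inv, hRh,
      ← mul_assoc, hRinv, one_mul]
  have hBK : B * K = K * (1 - A) := by rw [mul_one_sub]; exact eq_sub_of_add_eq' e21
  have hBu : (K * (P * Q)⁻¹) * (1 - A) * (K * (P * Q)⁻¹)ᴴ = B := by
    have key : (K * (P * Q)⁻¹) * (1 - A) * (K * (P * Q)⁻¹)ᴴ * K = B * K := by
      calc (K * (P * Q)⁻¹) * (1 - A) * (K * (P * Q)⁻¹)ᴴ * K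
          = (K * (P * Q)⁻¹) * (1 - A) * ((K * (P * Q)⁻¹)ᴴ * K) := by rw [mul_assoc]
        _ = (K * (P * Q)⁻¹) * ((1 - A) * (P * Q)) := by rw [huHK, mul_assoc]
        _ = (K * (P * Q)⁻¹) * ((P * Q) * (1 - A)) := by rw [hR1A]
        _ = K * ((P * Q)⁻¹ * (P * Q)) * (1 - A) := by simp only [mul_assoc]
        _ = K * (1 - A) := by rw [hRinv', mul_one]
        _ = B * K := hBK.symm
    calc (K * (P * Q)⁻¹) * (1 - A) * (K * (P * Q)⁻¹)ᴴ
        = (K * (P * Q)⁻¹) * (1 - A) * (K * (P * Q)⁻¹)ᴴ * (K * K⁻¹) := by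
          rw [hKinv, mul_one]
      _ = ((K * (P * Q)⁻¹) * (1 - A) * (K * (P * Q)⁻¹)ᴴ * K) * K⁻¹ := by
          rw [← mul_assoc]
      _ = B * (K * K⁻¹) := by rw [key, mul_assoc]
      _ = B := by rw [hKinv, mul_one]
  refine ⟨K * (P * Q)⁻¹, hu1, hu2, hBu.symm, ?_, ?_⟩
  · rw [hmA, hm1A]; exact huR.symm
  · rw [hmA, hm1A]
    conv_lhs => rw [hS]
    rw [Matrix.fromBlocks_conjTranspose, Matrix.fromBlocks_multiply]
    erw [Matrix.fromBlocks_multiply]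
    simp only [Matrix.conjTranspose_zero, Matrix.conjTranspose_one, one_mul, mul_one,
      zero_mul, mul_zero, add_zero, zero_add]
    rw [hRuh, huR, hBu]
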